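/- arXiv:1405.3090 — 3 statements merged into one kernel-verified Lean document; each statement's English description precedes it below -/
import Mathlib

section
/- Let Ψ be a class of weights (over Set). The following are equivalent: (1) Ψ is sound; (2) for every small category E, a weight φ : Eᵒᵖ ⥤ Set is Ψ-flat whenever, for every weight ψ' : Eᵒᵖ ⥤ Set of the form ψ' = Lan_{Tᵒᵖ} ψ (the left Kan extension along Tᵒᵖ of some ψ : Dᵒᵖ ⥤ Set belonging to Ψ, for some functor T : D ⥤ E), the canonical map can : Colim_φ(e ↦ Nat(ψ', E(−, e))) → Nat(ψ', φ) — sending the class represented by (e, x ∈ φ(e), τ : ψ' ⟶ E(−, e)) to x̂ ∘ τ, where x̂ : E(−, e) ⟶ φ corresponds to x under the Yoneda lemma — is a bijection. -/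
open CategoryTheory CategoryTheory.Limits Opposite

namespace Paper

/-- The category of elements `el(φ)` of a weight `φ : Eᵒᵖ ⥤ Type`:
objects are pairs `(e, x)` with `x ∈ φ(e)`, a morphism `(e,x) → (e',x')` is
`t : e ⟶ e'` with `φ(t)(x') = x`. -/
abbrev elCat {E : Type} [SmallCategory E] (φ : Eᵒᵖ ⥤ Type) : Type :=
  (Functor.Elements φ)ᵒᵖ

/-- The projection `p : el(φ) ⥤ E`. -/
def elProj {E : Type} [SmallCategory E] (φ : Eᵒᵖ ⥤ Type) : elCat φ ⥤ E :=
  (CategoryOfElements.π φ).leftOp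

/-- The object `(e, x)` of `el(φ)`. -/
def elObj {E : Type} [SmallCategory E] (φ : Eᵒᵖ ⥤ Type) (e : E) (x : φ.obj (op e)) :
    elCat φ :=
  op ⟨op e, x⟩

/-- The `φ`-weighted colimit functor `Colim_φ : (E ⥤ Set) ⥤ Set`,
sending `F` to the colimit of `p ⋙ F` where `p : el(φ) ⥤ E`. -/
noncomputable def wColim {E : Type} [SmallCategory E] (φ : Eᵒᵖ ⥤ Type) :
    (E ⥤ Type) ⥤ Type :=
  (Functor.whiskeringLeft (elCat φ) E Type).obj (elProj φ) ⋙ colim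

/-- The `ψ`-weighted limit of a diagram `G : Dᵒᵖ ⥤ (E ⥤ Set)`, computed pointwise:
`(Lim_ψ G)(e) = Nat(ψ, G(−)(e))`. -/
def wLim {D E : Type} [SmallCategory D] [SmallCategory E]
    (ψ : Dᵒᵖ ⥤ Type) (G : Dᵒᵖ ⥤ E ⥤ Type) : E ⥤ Type :=
  G.flip ⋙ coyoneda.obj (op ψ)

/-- Evaluation of the weighted limit at `y ∈ ψ(d)`. -/
def wLimEval {D E : Type} [SmallCategory D] [SmallCategory E]
    (ψ : Dᵒᵖ ⥤ Type) (G : Dᵒᵖ ⥤ E ⥤ Type) (d : Dᵒᵖ) (y : ψ.obj d) :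
    wLim ψ G ⟶ G.obj d where
  app e := TypeCat.ofHom fun α => α.app d y
  naturality e e' f := rfl

/-- The canonical comparison `H(Lim_ψ G) → Nat(ψ, H ∘ G)` for a functor
`H : (E ⥤ Set) ⥤ Set`.  `H` preserves the `ψ`-weighted limit of `G` precisely
when this map is a bijection. -/
def wLimComparison {D E : Type} [SmallCategory D] [SmallCategory E]
    (H : (E ⥤ Type) ⥤ Type) (ψ : Dᵒᵖ ⥤ Type) (G : Dᵒᵖ ⥤ E ⥤ Type) :
    H.obj (wLim ψ G) → (ψ ⟶ G ⋙ H) := fun z =>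
  { app := fun d => TypeCat.ofHom fun y => H.map (wLimEval ψ G d y) z
    naturality := fun d d' g => by
      ext y
      have h : wLimEval ψ G d' (ψ.map g y) = wLimEval ψ G d y ≫ G.map g := by
        ext e α
        exact ConcreteCategory.congr_hom (α.naturality g) y
      change H.map (wLimEval ψ G d' (ψ.map g y)) z = H.map (G.map g) (H.map (wLimEval ψ G d y) z)
      rw [h, H.map_comp]
      rfl }

/-- A bundled weight: a small category `D` together with a functor `Dᵒᵖ ⥤ Set`. -/
structure Weight : Type 1 where
  D : Type
  [instD : SmallCategory D]
  w : D ᵒᵖ ⥤ Type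

attribute [instance] Weight.instD

/-- A class of weights. -/
abbrev WeightClass : Type 1 := Weight → Prop

/-- A weight `φ : Eᵒᵖ ⥤ Set` is `Ψ`-flat if `Colim_φ` preserves the `ψ`-weighted
limit of every diagram `G : Dᵒᵖ ⥤ (E ⥤ Set)`, for every `ψ` in `Ψ`. -/
def IsFlat (Ψ : WeightClass) {E : Type} [SmallCategory E] (φ : Eᵒᵖ ⥤ Type) : Prop :=
  ∀ W : Weight, Ψ W → ∀ G : W.Dᵒᵖ ⥤ E ⥤ Type,
    Function.Bijective (wLimComparison (wColim φ) W.w G)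

/-- `Ψ` is sound if every weight `φ` is `Ψ`-flat as soon as `Colim_φ` preserves
the `ψ`-weighted limits of all representable-valued diagrams `d ↦ E(T d, −)`. -/
def IsSound (Ψ : WeightClass) : Prop :=
  ∀ (E : Type) [SmallCategory E] (φ : Eᵒᵖ ⥤ Type),
    (∀ W : Weight, Ψ W → ∀ T : W.D ⥤ E,
      Function.Bijective (wLimComparison (wColim φ) W.w (T.op ⋙ coyoneda))) →
    IsFlat Ψ φ



/-- The cocone defining the canonical map
`Colim_φ (e ↦ Nat(ψ', E(−,e))) → Nat(ψ', φ)`. -/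
def canCocone {E : Type} [SmallCategory E] (φ ψ' : Eᵒᵖ ⥤ Type) :
    Cocone (elProj φ ⋙ (yoneda ⋙ coyoneda.obj (op ψ'))) where
  pt := ψ' ⟶ φ
  ι :=
    { app := fun j => TypeCat.ofHom fun τ => τ ≫ yonedaEquiv.symm j.unop.2
      naturality := fun j j' f => by
        ext τ
        change (τ ≫ yoneda.map f.unop.val.unop) ≫ yonedaEquiv.symm j'.unop.2 = τ ≫ yonedaEquiv.symm j.unop.2
        rw [Category.assoc]
        congr 1
        have := yonedaEquiv_symm_map f.unop.val j'.unop.2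
        rw [f.unop.property] at this
        exact this.symm }

/-- The canonical map `can : Colim_φ (e ↦ Nat(ψ', E(−,e))) → Nat(ψ', φ)`,
sending the class of `(e, x ∈ φ(e), τ : ψ' ⟶ E(−,e))` to `x̂ ∘ τ`, where
`x̂ : E(−,e) ⟶ φ` corresponds to `x` under the Yoneda lemma. -/
noncomputable def canMap {E : Type} [SmallCategory E] (φ ψ' : Eᵒᵖ ⥤ Type) :
    (wColim φ).obj (yoneda ⋙ coyoneda.obj (op ψ')) → (ψ' ⟶ φ) :=
  ⇑(colimit.desc (elProj φ ⋙ (yoneda ⋙ coyoneda.obj (op ψ'))) (canCocone φ ψ'))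

/-! For `ψ' = Lan_{Tᵒᵖ} ψ`, the canonical map `can` is, up to bijections on both sides, the
comparison map of `Colim_φ` for the `ψ`-weighted limit of `d ↦ E(T d, −)`. On the source side,
`Nat(Lan ψ, E(−, e)) ≅ Nat(ψ, E(T −, e))` naturally in `e`; on the target side, the co-Yoneda
isomorphism `Colim_φ E(e, −) ≅ φ(e)` together with the universal property of `Lan ψ` gives
`Nat(ψ, Colim_φ E(T −, −)) ≃ Nat(ψ', φ)`. Hence the two criteria ask for the same bijections. -/

section WColim

variable {E : Type} [SmallCategory E] (φ : Eᵒᵖ ⥤ Type)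

lemma wColim_map_ι {F G : E ⥤ Type} (η : F ⟶ G) (j : elCat φ) (z : F.obj ((elProj φ).obj j)) :
    (wColim φ).map η (colimit.ι (elProj φ ⋙ F) j z) =
      colimit.ι (elProj φ ⋙ G) j (η.app _ z) :=
  ConcreteCategory.congr_hom (ι_colimMap (Functor.whiskerLeft (elProj φ) η) j) z

lemma wLimComparison_wColim_ι {D : Type} [SmallCategory D] (ψ : Dᵒᵖ ⥤ Type)
    (G : Dᵒᵖ ⥤ E ⥤ Type) (j : elCat φ) (z : (wLim ψ G).obj ((elProj φ).obj j))
    (d : Dᵒᵖ) (y : ψ.obj d) :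
    (wLimComparison (wColim φ) ψ G (colimit.ι (elProj φ ⋙ wLim ψ G) j z)).app d y =
      colimit.ι (elProj φ ⋙ G.obj d) j (z.app d y) :=
  wColim_map_ι φ _ j z

lemma canMap_ι (ψ' : Eᵒᵖ ⥤ Type) (j : elCat φ)
    (τ : ψ' ⟶ yoneda.obj ((elProj φ).obj j)) :
    canMap φ ψ' (colimit.ι (elProj φ ⋙ (yoneda ⋙ coyoneda.obj (op ψ'))) j τ) =
      τ ≫ yonedaEquiv.symm j.unop.2 :=
  ConcreteCategory.congr_hom (colimit.ι_desc (canCocone φ ψ') j) τ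

def coyonedaCocone (e : Eᵒᵖ) : Cocone (elProj φ ⋙ coyoneda.obj e) where
  pt := φ.obj e
  ι :=
    { app := fun j => TypeCat.ofHom fun f => φ.map f.op j.unop.2
      naturality := fun j j' t => by
        ext f
        change φ.map (t.unop.val ≫ f.op) j'.unop.snd = φ.map f.op j.unop.snd
        exact (φ.map_comp_apply _ _ _).trans (congrArg (φ.map f.op) t.unop.2) }

noncomputable def wColimCoyonedaHom : coyoneda ⋙ wColim φ ⟶ φ where
  app e := colimit.desc _ (coyonedaCocone φ e)
  naturality e e' g := by
    ext z
    obtain ⟨j, f, rfl⟩ := Types.jointly_surjective' (F := elProj φ ⋙ coyoneda.obj e) z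
    change colimit.desc _ (coyonedaCocone φ e') ((wColim φ).map (coyoneda.map g) _) =
      φ.map g (colimit.desc _ (coyonedaCocone φ e) _)
    rw [wColim_map_ι, colimit.ι_desc_apply, colimit.ι_desc_apply]
    exact φ.map_comp_apply f.op g j.unop.snd

lemma wColimCoyonedaHom_app_ι (e : Eᵒᵖ) (j : elCat φ) (f : e.unop ⟶ (elProj φ).obj j) :
    (wColimCoyonedaHom φ).app e (colimit.ι (elProj φ ⋙ coyoneda.obj e) j f) =
      φ.map f.op j.unop.2 :=
  ConcreteCategory.congr_hom (colimit.ι_desc (coyonedaCocone φ e) j) f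

lemma colimit_ι_coyoneda_eq_ι_id (e : E) (j : elCat φ) (f : e ⟶ (elProj φ).obj j) :
    colimit.ι (elProj φ ⋙ coyoneda.obj (op e)) j f =
      colimit.ι (elProj φ ⋙ coyoneda.obj (op e)) (elObj φ e (φ.map f.op j.unop.2)) (𝟙 e) := by
  let m : elObj φ e (φ.map f.op j.unop.2) ⟶ j := Quiver.Hom.op ⟨f.op, rfl⟩
  rw [← colimit.w (elProj φ ⋙ coyoneda.obj (op e)) m]
  exact congrArg _ (Category.id_comp f).symm

lemma wColimCoyonedaHom_app_bijective (e : Eᵒᵖ) :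
    Function.Bijective ((wColimCoyonedaHom φ).app e) := by
  refine Function.bijective_iff_has_inverse.2
    ⟨fun x => colimit.ι (elProj φ ⋙ coyoneda.obj e) (elObj φ e.unop x) (𝟙 e.unop), ?_, ?_⟩
  · intro z
    obtain ⟨j, f, rfl⟩ := Types.jointly_surjective' (F := elProj φ ⋙ coyoneda.obj e) z
    rw [wColimCoyonedaHom_app_ι]
    exact (colimit_ι_coyoneda_eq_ι_id φ e.unop j f).symm
  · intro x
    exact (wColimCoyonedaHom_app_ι φ e (elObj φ e.unop x) (𝟙 e.unop)).trans
      (φ.map_id_apply _ x)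

instance : IsIso (wColimCoyonedaHom φ) :=
  have (e : Eᵒᵖ) : IsIso ((wColimCoyonedaHom φ).app e) :=
    (isIso_iff_bijective _).2 (wColimCoyonedaHom_app_bijective φ e)
  NatIso.isIso_of_isIso_app _

end WColim

section LeftKanExtension

variable {D E : Type} [SmallCategory D] [SmallCategory E] {ψ : Dᵒᵖ ⥤ Type} {T : D ⥤ E}
  {ψ' : Eᵒᵖ ⥤ Type}

noncomputable def lanHomYonedaIso (α : ψ ⟶ T.op ⋙ ψ') [ψ'.IsLeftKanExtension α] :
    yoneda ⋙ coyoneda.obj (op ψ') ≅ wLim ψ (T.op ⋙ coyoneda) :=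
  NatIso.ofComponents
    (fun e => Equiv.toIso (ψ'.homEquivOfIsLeftKanExtension α (yoneda.obj e)))
    (fun _ => rfl)

noncomputable def lanHomEquiv (α : ψ ⟶ T.op ⋙ ψ') [ψ'.IsLeftKanExtension α]
    (φ : Eᵒᵖ ⥤ Type) : (ψ ⟶ (T.op ⋙ coyoneda) ⋙ wColim φ) ≃ (ψ' ⟶ φ) :=
  ((Iso.refl ψ).homCongr (asIso (Functor.whiskerLeft T.op (wColimCoyonedaHom φ)))).trans
    (ψ'.homEquivOfIsLeftKanExtension α φ).symm

lemma canMap_eq_lanHomEquiv_wLimComparison (α : ψ ⟶ T.op ⋙ ψ') [ψ'.IsLeftKanExtension α]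
    (φ : Eᵒᵖ ⥤ Type)
    (z : (wColim φ).obj (yoneda ⋙ coyoneda.obj (op ψ'))) :
    canMap φ ψ' z = lanHomEquiv α φ (wLimComparison (wColim φ) ψ (T.op ⋙ coyoneda)
      ((wColim φ).map (lanHomYonedaIso α).hom z)) := by
  obtain ⟨j, τ, rfl⟩ :=
    Types.jointly_surjective' (F := elProj φ ⋙ (yoneda ⋙ coyoneda.obj (op ψ'))) z
  apply (ψ'.homEquivOfIsLeftKanExtension α φ).injective
  simp only [lanHomEquiv, Equiv.trans_apply, Equiv.apply_symm_apply,
    Iso.homCongr_apply, Iso.refl_inv, Category.id_comp, asIso_hom, canMap_ι, wColim_map_ι]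
  ext d y
  change _ = (wColimCoyonedaHom φ).app (T.op.obj d)
    ((wLimComparison (wColim φ) ψ (T.op ⋙ coyoneda) _).app d y)
  rw [wLimComparison_wColim_ι]
  exact (wColimCoyonedaHom_app_ι φ (T.op.obj d) j _).symm

theorem canMap_bijective_iff (α : ψ ⟶ T.op ⋙ ψ') [ψ'.IsLeftKanExtension α]
    (φ : Eᵒᵖ ⥤ Type) :
    Function.Bijective (canMap φ ψ') ↔
      Function.Bijective (wLimComparison (wColim φ) ψ (T.op ⋙ coyoneda)) := by
  have hiso : Function.Bijective ((wColim φ).map (lanHomYonedaIso α).hom) :=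
    (isIso_iff_bijective _).1 inferInstance
  have hcan : canMap φ ψ' = lanHomEquiv α φ ∘ wLimComparison (wColim φ) ψ (T.op ⋙ coyoneda) ∘
      (wColim φ).map (lanHomYonedaIso α).hom :=
    funext (canMap_eq_lanHomEquiv_wLimComparison α φ)
  rw [hcan, ← Function.comp_assoc,
    Function.Bijective.of_comp_iff _ hiso,
    Function.Bijective.of_comp_iff' (lanHomEquiv α φ).bijective]

end LeftKanExtension

/-- `Ψ` is sound iff flatness of a weight `φ : Eᵒᵖ ⥤ Set` follows
from bijectivity of the canonical maps `can : Colim_φ(e ↦ Nat(ψ', E(−,e))) → Nat(ψ', φ)`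
for all weights `ψ'` on `E` of the form `Lan_{Tᵒᵖ} ψ` with `ψ` in `Ψ`. -/
theorem soundness_iff_canonical_coend_criterion (Ψ : WeightClass) :
    IsSound Ψ ↔
      ∀ (E : Type) [SmallCategory E] (φ : Eᵒᵖ ⥤ Type),
        (∀ ψ' : Eᵒᵖ ⥤ Type,
          (∃ (D : Type) (_ : SmallCategory D) (ψ : Dᵒᵖ ⥤ Type) (T : D ⥤ E)
              (α : ψ ⟶ T.op ⋙ ψ'),
            Ψ (Weight.mk D ψ) ∧ ψ'.IsLeftKanExtension α) →
          Function.Bijective (canMap φ ψ')) →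
        IsFlat Ψ φ := by
  constructor
  · intro hSound E _ φ hCan
    refine hSound E φ fun W hW T => ?_
    exact (canMap_bijective_iff (T.op.pointwiseLeftKanExtensionUnit W.w) φ).1 <|
      hCan _ ⟨W.D, W.instD, W.w, T, T.op.pointwiseLeftKanExtensionUnit W.w, hW, inferInstance⟩
  · intro hCriterion E _ φ hRep
    refine hCriterion E φ fun ψ' ⟨D, _, ψ, T, α, hW, _⟩ => ?_
    exact (canMap_bijective_iff α φ).2 (hRep ⟨D, ψ⟩ hW T)

end Paper
end

section
/- Let 𝔻 be a class of small categories. The following are equivalent: (1) 𝔻 is sound; (2) every small category E is 𝔻-filtered provided that, for every small category D with Dᵒᵖ in 𝔻 and every functor T : D ⥤ E, the category of cocones on T is nonempty and connected. -/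
open CategoryTheory CategoryTheory.Limits Opposite

namespace Paper

/-- A bundled small category. -/
structure SmallCat : Type 1 where
  C : Type
  [instC : SmallCategory C]

attribute [instance] SmallCat.instC

/-- A class of small categories. -/
abbrev CatClass : Type 1 := SmallCat → Prop

/-- A weight `φ : Eᵒᵖ ⥤ Set` is `𝔻`-flat if `Colim_φ` preserves all (conical)
limits of shape `C`, for every `C` in `𝔻`. -/
def DFlat (𝔻 : CatClass) {E : Type} [SmallCategory E] (φ : Eᵒᵖ ⥤ Type) : Prop :=
  ∀ C : SmallCat, 𝔻 C → PreservesLimitsOfShape C.C (wColim φ)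

/-- A small category `E` is `𝔻`-filtered if `colim : (E ⥤ Set) ⥤ Set` preserves
all limits of shape `C`, for every `C` in `𝔻`. -/
def DFiltered (𝔻 : CatClass) (E : Type) [SmallCategory E] : Prop :=
  ∀ C : SmallCat, 𝔻 C → PreservesLimitsOfShape C.C (colim : (E ⥤ Type) ⥤ Type)

/-- The class `𝔻` is sound if every weight `φ : Eᵒᵖ ⥤ Set` is `𝔻`-flat as soon as
`Colim_φ` preserves, for every `C` in `𝔻`, all limits of shape `C` of diagrams
whose values are representable functors `E(e, −)`. -/
def DSound (𝔻 : CatClass) : Prop :=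
  ∀ (E : Type) [SmallCategory E] (φ : Eᵒᵖ ⥤ Type),
    (∀ C : SmallCat, 𝔻 C → ∀ K : C.C ⥤ E ⥤ Type,
      (∀ c : C.C, ∃ e : E, Nonempty (K.obj c ≅ coyoneda.obj (op e))) →
      PreservesLimit K (wColim φ)) →
    DFlat 𝔻 φ

/-!
For `S : Dᵒᵖ ⥤ E`, the limit of the representables `E(S d, −)` is the functor `S.cocones`, whose
colimit is the set of connected components of `Cocone S`, while each `colim E(S d, −)` is a point.
So if every such `Cocone S` is connected, `colim` preserves limits of representable diagrams;
soundness, applied to the terminal weight (whose weighted colimit is `colim`), makes `E`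
`𝔻`-filtered.

Conversely `Colim_φ` is `colim` over `el(φ)` precomposed with the projection `p`. A diagram
`T : Dᵒᵖ ⥤ el(φ)` is a diagram `p ∘ T` in `E` together with a compatible family of elements
`ζ_d ∈ φ(p T d)`, and the cocones on `T` are the cocones on `p ∘ T` lying over `ζ`. If `Colim_φ`
preserves the limit of the representables `E(p T d, −)`, then exactly one element of
`Colim_φ (p ∘ T).cocones` lies over `ζ`; hence `Cocone T` is nonempty and connected, `el(φ)`
satisfies the criterion, and its `colim`, hence `Colim_φ`, preserves the limits.
-/

universe v u

section CoconesAsLimit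

variable {J : Type v} [SmallCategory J]

section

variable {E : Type u} [Category.{v} E]

def coconesCone (S : Jᵒᵖ ⥤ E) : Cone (S.rightOp ⋙ coyoneda) where
  pt := S.cocones
  π :=
    { app j := { app e := TypeCat.ofHom fun ι => ι.app (op j) }
      naturality j j' u := by
        ext e ι
        simp }

def coconesConeIsLimit (S : Jᵒᵖ ⥤ E) : IsLimit (coconesCone S) where
  lift s :=
    { app e := TypeCat.ofHom fun a =>
        { app j := (s.π.app j.unop).app e a
          naturality j j' u := by
            simpa using ConcreteCategory.congr_hom (NatTrans.congr_app (s.w u.unop) e) a }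
      naturality e e' g := by
        ext a
        apply NatTrans.ext
        funext j
        exact ConcreteCategory.congr_hom ((s.π.app j.unop).naturality g) a }
  uniq s m hm := by
    ext e a
    apply NatTrans.ext
    funext j
    exact ConcreteCategory.congr_hom (NatTrans.congr_app (hm j.unop) e) a

instance (X : Eᵒᵖ) : Subsingleton (colimit (coyoneda.obj X)) :=
  (Coyoneda.colimitCoyonedaIso X).toEquiv.subsingleton

end

noncomputable def isLimitOfSubsingleton {K : J ⥤ Type u} (c : Cone K) (h₁ : Nonempty c.pt)
    (h₂ : Subsingleton c.pt) (hK : ∀ j, Subsingleton (K.obj j)) : IsLimit c where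
  lift _ := TypeCat.ofHom fun _ => h₁.some
  fac _ _ := by ext; subsingleton
  uniq _ _ _ := by ext; subsingleton

variable {E : Type v} [SmallCategory E]

theorem colimit_ι_cocones_eq (S : Jᵒᵖ ⥤ E) [IsPreconnected (Cocone S)] (s s' : Cocone S) :
    colimit.ι S.cocones s.pt s.ι = colimit.ι S.cocones s'.pt s'.ι :=
  constant_of_preserves_morphisms (fun s : Cocone S => colimit.ι S.cocones s.pt s.ι)
    (fun s s' f => by
      rw [← colimit.w_apply S.cocones f.hom]
      congr 1
      apply NatTrans.ext
      funext j
      simp) s s'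

instance (S : Jᵒᵖ ⥤ E) [IsPreconnected (Cocone S)] : Subsingleton (colimit S.cocones) where
  allEq x y := by
    obtain ⟨e, ι, rfl⟩ := Types.jointly_surjective' x
    obtain ⟨e', ι', rfl⟩ := Types.jointly_surjective' y
    exact colimit_ι_cocones_eq S ⟨e, ι⟩ ⟨e', ι'⟩

instance (S : Jᵒᵖ ⥤ E) [Nonempty (Cocone S)] : Nonempty (colimit S.cocones) :=
  let s : Cocone S := Classical.arbitrary _
  ⟨colimit.ι S.cocones s.pt s.ι⟩

theorem preservesLimit_colim_of_isConnected (S : Jᵒᵖ ⥤ E) [IsConnected (Cocone S)] :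
    PreservesLimit (S.rightOp ⋙ coyoneda) (colim : (E ⥤ Type v) ⥤ Type v) :=
  have : Nonempty (Cocone S) := IsConnected.is_nonempty
  preservesLimit_of_preserves_limit_cone (coconesConeIsLimit S) <|
    isLimitOfSubsingleton _ (inferInstanceAs (Nonempty (colimit S.cocones)))
      (inferInstanceAs (Subsingleton (colimit S.cocones)))
      fun _ => inferInstanceAs (Subsingleton (colimit (coyoneda.obj _)))

theorem preservesLimit_colim_of_forall_isConnected (K : J ⥤ E ⥤ Type v)
    (hK : ∀ j, ∃ e : E, Nonempty (K.obj j ≅ coyoneda.obj (op e)))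
    (hE : ∀ S : Jᵒᵖ ⥤ E, IsConnected (Cocone S)) : PreservesLimit K colim := by
  have hK' (j : J) : coyoneda.essImage (K.obj j) :=
    let ⟨e, ⟨i⟩⟩ := hK j; ⟨op e, ⟨i.symm⟩⟩
  let F := Functor.essImage.liftFunctor K coyoneda hK'
  have : PreservesLimit (F ⋙ coyoneda) colim :=
    have := hE F.leftOp
    preservesLimit_colim_of_isConnected F.leftOp
  exact preservesLimit_of_iso_diagram colim (Functor.essImage.liftFunctorCompIso K coyoneda hK')

end CoconesAsLimit

section Elements

variable {E : Type} [SmallCategory E] (φ : Eᵒᵖ ⥤ Type)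

def elHom {X Y : elCat φ} (f : (elProj φ).obj X ⟶ (elProj φ).obj Y)
    (h : φ.map f.op Y.unop.2 = X.unop.2) : X ⟶ Y :=
  Quiver.Hom.op (⟨f.op, h⟩ : Y.unop ⟶ X.unop)

@[simp]
theorem elProj_map_elHom {X Y : elCat φ} (f : (elProj φ).obj X ⟶ (elProj φ).obj Y)
    (h : φ.map f.op Y.unop.2 = X.unop.2) : (elProj φ).map (elHom φ f h) = f :=
  rfl

theorem map_elProj_map {X Y : elCat φ} (g : X ⟶ Y) :
    φ.map ((elProj φ).map g).op Y.unop.2 = X.unop.2 :=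
  g.unop.2

theorem map_comp_elProj_map {a : E} {X Y : elCat φ} (f : a ⟶ (elProj φ).obj X) (g : X ⟶ Y) :
    φ.map (f ≫ (elProj φ).map g).op Y.unop.2 = φ.map f.op X.unop.2 := by
  rw [op_comp]
  exact (φ.map_comp_apply _ _ _).trans (congrArg (φ.map f.op) (map_elProj_map φ g))

instance : (elProj φ).Faithful where
  map_injective w := Quiver.Hom.unop_inj (Subtype.ext (Quiver.Hom.unop_inj w))

end Elements

section ConstPUnitWeight

variable (E : Type) [SmallCategory E]

instance : (elProj (Types.constPUnitFunctor Eᵒᵖ)).IsEquivalence where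
  full := ⟨fun f => ⟨elHom _ f rfl, rfl⟩⟩
  essSurj := ⟨fun e => ⟨op ⟨op e, PUnit.unit⟩, ⟨Iso.refl _⟩⟩⟩

noncomputable def wColimConstPUnitIso : wColim (Types.constPUnitFunctor Eᵒᵖ) ≅ colim :=
  Functor.Final.colimIso _

end ConstPUnitWeight

section CoconesInElements

variable {E : Type} [SmallCategory E] (φ : Eᵒᵖ ⥤ Type)

theorem wColim_map_ι_apply {F G : E ⥤ Type} (η : F ⟶ G) (X : elCat φ)
    (x : F.obj ((elProj φ).obj X)) :
    (wColim φ).map η (colimit.ι (elProj φ ⋙ F) X x) = colimit.ι (elProj φ ⋙ G) X (η.app _ x) :=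
  colimit.ι_map_apply (Functor.whiskerLeft (elProj φ) η) X x

theorem colimit_ι_elProj_map {X Y : elCat φ} (g : X ⟶ Y) :
    colimit.ι (elProj φ ⋙ coyoneda.obj (op ((elProj φ).obj X))) Y ((elProj φ).map g) =
      colimit.ι (elProj φ ⋙ coyoneda.obj (op ((elProj φ).obj X))) X (𝟙 _) := by
  simpa using colimit.w_apply (elProj φ ⋙ coyoneda.obj (op ((elProj φ).obj X))) g
    (x := (𝟙 ((elProj φ).obj X) : (elProj φ ⋙ coyoneda.obj (op ((elProj φ).obj X))).obj X))

def evalCocone (a : E) : Cocone (elProj φ ⋙ coyoneda.obj (op a)) where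
  pt := φ.obj (op a)
  ι :=
    { app X := TypeCat.ofHom fun g => φ.map g.op X.unop.2
      naturality X Y h := by
        ext g
        exact map_comp_elProj_map φ g h }

variable {C : Type} [SmallCategory C] (T : Cᵒᵖ ⥤ elCat φ)

/-- The point `ζ` of `lim_j Colim_φ E(S j, −)` corresponding to the elements of `φ` carried by `T`,
where `S = T ⋙ elProj φ`. -/
noncomputable def weightSection : ((T ⋙ elProj φ).rightOp ⋙ coyoneda ⋙ wColim φ).sections :=
  ⟨fun j => colimit.ι (elProj φ ⋙ coyoneda.obj (op ((T ⋙ elProj φ).obj (op j)))) (T.obj (op j))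
      (𝟙 _), fun {_ _} u =>
    (wColim_map_ι_apply φ _ _ _).trans
      ((congrArg _ (Category.comp_id _)).trans (colimit_ι_elProj_map φ (T.map u.op)))⟩

/-- The cocones on `T` are exactly the cocones on `T ⋙ elProj φ` with this property. -/
def CoconeLifts {X : elCat φ} (ι : T ⋙ elProj φ ⟶ (Functor.const Cᵒᵖ).obj ((elProj φ).obj X)) :
    Prop :=
  ∀ j, φ.map (ι.app j).op X.unop.2 = (T.obj j).unop.2

variable {φ T}

def liftCocone {X : elCat φ} {ι : T ⋙ elProj φ ⟶ (Functor.const Cᵒᵖ).obj ((elProj φ).obj X)}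
    (h : CoconeLifts φ T ι) : Cocone T where
  pt := X
  ι :=
    { app j := elHom φ (ι.app j) (h j)
      naturality j j' u := (elProj φ).map_injective (by simpa using ι.naturality u) }

theorem coconeLifts_mapCocone (s : Cocone T) : CoconeLifts φ T ((elProj φ).mapCocone s).ι :=
  fun j => map_elProj_map φ (s.ι.app j)

theorem liftCocone_mapCocone (s : Cocone T) : liftCocone (coconeLifts_mapCocone s) = s :=
  rfl

theorem coconeLifts_iff_of_rel {n m : Σ X, (elProj φ ⋙ (T ⋙ elProj φ).cocones).obj X}
    (h : (elProj φ ⋙ (T ⋙ elProj φ).cocones).ColimitTypeRel n m) :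
    CoconeLifts φ T n.2 ↔ CoconeLifts φ T m.2 := by
  obtain ⟨g, hg⟩ := h
  refine forall_congr' fun j => ?_
  rw [hg]
  exact Iff.of_eq (congrArg (· = _) (map_comp_elProj_map φ (n.2.app j) g).symm)

theorem coconeLifts_iff_of_eqvGen {n m : Σ X, (elProj φ ⋙ (T ⋙ elProj φ).cocones).obj X}
    (h : Relation.EqvGen (elProj φ ⋙ (T ⋙ elProj φ).cocones).ColimitTypeRel n m) :
    CoconeLifts φ T n.2 ↔ CoconeLifts φ T m.2 := by
  induction h with
  | rel _ _ h => exact coconeLifts_iff_of_rel h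
  | refl => rfl
  | symm _ _ _ ih => exact ih.symm
  | trans _ _ _ _ _ ih₁ ih₂ => exact ih₁.trans ih₂

theorem zigzag_liftCocone_of_eqvGen {n m : Σ X, (elProj φ ⋙ (T ⋙ elProj φ).cocones).obj X}
    (h : Relation.EqvGen (elProj φ ⋙ (T ⋙ elProj φ).cocones).ColimitTypeRel n m)
    (hn : CoconeLifts φ T n.2) (hm : CoconeLifts φ T m.2) :
    Zigzag (liftCocone hn) (liftCocone hm) := by
  induction h with
  | rel _ _ h =>
    obtain ⟨g, hg⟩ := h
    refine Zigzag.of_hom ⟨g, fun j => (elProj φ).map_injective ?_⟩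
    simp [liftCocone, hg]
  | refl => rfl
  | symm _ _ _ ih => exact (ih hm hn).symm
  | trans _ _ _ h₁ _ ih₁ ih₂ =>
    have hy := (coconeLifts_iff_of_eqvGen h₁).1 hn
    exact (ih₁ hn hy).trans (ih₂ hy hm)

theorem wColim_map_π_ι_mapCocone (s : Cocone T) (j : C) :
    (wColim φ).map ((coconesCone (T ⋙ elProj φ)).π.app j)
        (colimit.ι (elProj φ ⋙ (T ⋙ elProj φ).cocones) s.pt ((elProj φ).mapCocone s).ι) =
      (weightSection φ T).1 j :=
  (wColim_map_ι_apply φ _ s.pt _).trans (colimit_ι_elProj_map φ (s.ι.app (op j)))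

theorem coconeLifts_of_wColim_map_π_eq {X : elCat φ}
    {ι : T ⋙ elProj φ ⟶ (Functor.const Cᵒᵖ).obj ((elProj φ).obj X)}
    (h : ∀ j, (wColim φ).map ((coconesCone (T ⋙ elProj φ)).π.app j)
        (colimit.ι (elProj φ ⋙ (T ⋙ elProj φ).cocones) X ι) = (weightSection φ T).1 j) :
    CoconeLifts φ T ι := fun j => by
  have hj : colimit.ι (elProj φ ⋙ coyoneda.obj (op ((T ⋙ elProj φ).obj j))) X (ι.app j) =
      colimit.ι (elProj φ ⋙ coyoneda.obj (op ((T ⋙ elProj φ).obj j))) (T.obj j) (𝟙 _) :=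
    (wColim_map_ι_apply φ ((coconesCone (T ⋙ elProj φ)).π.app j.unop) X ι).symm.trans (h j.unop)
  have := congrArg (colimit.desc _ (evalCocone φ ((T ⋙ elProj φ).obj j))) hj
  rw [colimit.ι_desc_apply, colimit.ι_desc_apply] at this
  exact this.trans (φ.map_id_apply _ _)

theorem isConnected_cocone_of_preservesLimit
    [PreservesLimit ((T ⋙ elProj φ).rightOp ⋙ coyoneda) (wColim φ)] :
    IsConnected (Cocone T) := by
  obtain ⟨z, hz, huniq⟩ := (Types.isLimit_iff _).1
    ⟨isLimitOfPreserves (wColim φ) (coconesConeIsLimit (T ⋙ elProj φ))⟩ _ (weightSection φ T).2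
  have hnode (s : Cocone T) :
      colimit.ι (elProj φ ⋙ (T ⋙ elProj φ).cocones) s.pt ((elProj φ).mapCocone s).ι = z :=
    huniq _ (wColim_map_π_ι_mapCocone s)
  obtain ⟨X, ι, rfl⟩ := Types.jointly_surjective' z
  have : Nonempty (Cocone T) := ⟨liftCocone (coconeLifts_of_wColim_map_π_eq hz)⟩
  refine zigzag_isConnected fun s s' => ?_
  simpa only [liftCocone_mapCocone] using
    zigzag_liftCocone_of_eqvGen (Types.colimit_eq ((hnode s).trans (hnode s').symm))
      (coconeLifts_mapCocone s) (coconeLifts_mapCocone s')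

end CoconesInElements

/-- A class `𝔻` of small categories is sound iff every small
category `E` is `𝔻`-filtered provided that, for every small category `D` with
`Dᵒᵖ` in `𝔻` and every functor `T : D ⥤ E`, the category of cocones on `T` is
nonempty and connected. -/
theorem soundness_iff_cocones_criterion (𝔻 : CatClass) :
    DSound 𝔻 ↔
      ∀ (E : Type) [SmallCategory E],
        (∀ C : SmallCat, 𝔻 C → ∀ T : C.Cᵒᵖ ⥤ E, IsConnected (Cocone T)) →
        DFiltered 𝔻 E := by
  constructor
  · intro hSound E _ hE C hC
    have := hSound E (Types.constPUnitFunctor Eᵒᵖ) (fun C' hC' K hK =>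
      have := preservesLimit_colim_of_forall_isConnected K hK (hE C' hC')
      preservesLimit_of_natIso K (wColimConstPUnitIso E).symm) C hC
    exact preservesLimitsOfShape_of_natIso (wColimConstPUnitIso E)
  · intro hCriterion E _ φ hφ C hC
    have := hCriterion (elCat φ) (fun C' hC' T =>
      have := hφ C' hC' ((T ⋙ elProj φ).rightOp ⋙ coyoneda) fun _ => ⟨_, ⟨Iso.refl _⟩⟩
      isConnected_cocone_of_preservesLimit (T := T)) C hC
    exact inferInstanceAs (PreservesLimitsOfShape C.C
      ((Functor.whiskeringLeft (elCat φ) E Type).obj (elProj φ) ⋙ colim))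

end Paper
end

section
/- Let E be a small category, φ : Eᵒᵖ ⥤ Set a weight, I a finite set, and (eᵢ)_{i∈I} a family of objects of E. The canonical map can : Colim_φ(e ↦ ∏_{i∈I} E(eᵢ, e)) → ∏_{i∈I} φ(eᵢ), sending the class represented by an object (e, x) of el(φ) together with morphisms tᵢ : eᵢ → e of E to the tuple (φ(tᵢ)(x))_{i∈I}, is injective if and only if for every tuple (xᵢ)_{i∈I} with xᵢ ∈ φ(eᵢ), any two cocones in el(φ) over the discrete family ((eᵢ, xᵢ))_{i∈I} are connected by a finite zig-zag of morphisms of cocones (morphisms of el(φ) between the vertices commuting with the cocone injections). -/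
/-! The colimit of a `Type`-valued functor `F` is the set of connected components of its
category of elements. A cocone over `((eᵢ, xᵢ))ᵢ` in `el(φ)` is the same thing as an element
`((e, x), (tᵢ)ᵢ)` of the diagram `e ↦ ∏ᵢ E(eᵢ, e)` that `can` sends to `(xᵢ)ᵢ`, and morphisms of
cocones are the morphisms of the category of elements between such elements. Since `can` is
constant along morphisms, a zigzag between two elements over `(xᵢ)ᵢ` never leaves that fibre,
so `can` is injective exactly when each of its fibres is preconnected. -/

open CategoryTheory CategoryTheory.Limits Opposite
namespace Paper
/-- The functor `e ↦ ∏_{i ∈ I} E(eᵢ, e)`. -/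
def prodHomFunctor {E : Type} [SmallCategory E] {I : Type} (e : I → E) : E ⥤ Type where
  obj x := ∀ i, e i ⟶ x
  map f := TypeCat.ofHom (fun t => fun i => t i ≫ f)
  map_id := by intro x; ext t; simp
  map_comp := by intro x y z f g; ext t; simp

/-- The cocone defining the canonical map
`Colim_φ (e ↦ ∏ᵢ E(eᵢ, e)) → ∏ᵢ φ(eᵢ)`. -/
def canProdCocone {E : Type} [SmallCategory E] (φ : Eᵒᵖ ⥤ Type)
    {I : Type} (e : I → E) :
    Cocone (elProj φ ⋙ prodHomFunctor e) where
  pt := ∀ i, φ.obj (op (e i))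
  ι :=
    { app := fun j => TypeCat.ofHom (fun t i => φ.map (t i).op j.unop.2)
      naturality := fun j j' f => by
        ext t
        funext i
        simp only [TypeCat.Fun.toFun_apply, types_comp_apply, TypeCat.ofHom_apply,
          Functor.const_obj_map]
        exact (Functor.map_comp_apply φ f.unop.1 (t i).op _).trans
          (congrArg _ f.unop.property) }

/-- The canonical map `can : Colim_φ (e ↦ ∏ᵢ E(eᵢ, e)) → ∏ᵢ φ(eᵢ)`, sending the
class of `((e, x), (tᵢ : eᵢ ⟶ e)ᵢ)` to `(φ(tᵢ)(x))ᵢ`. -/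
noncomputable def canProd {E : Type} [SmallCategory E] (φ : Eᵒᵖ ⥤ Type)
    {I : Type} (e : I → E) :
    (wColim φ).obj (prodHomFunctor e) → ∀ i, φ.obj (op (e i)) :=
  fun y => colimit.desc (elProj φ ⋙ prodHomFunctor e) (canProdCocone φ e) y


section ElementsOver

variable {J : Type*} [Category* J] {F : J ⥤ Type*} (s : Cocone F)

abbrev ElementsOver (x : s.pt) : Type _ :=
  ObjectProperty.FullSubcategory fun p : F.Elements => s.ι.app p.1 p.2 = x

variable {s}

lemma Cocone.ι_app_eq_of_eqvGen {p q : Σ j, F.obj j}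
    (h : Relation.EqvGen F.ColimitTypeRel p q) : s.ι.app p.1 p.2 = s.ι.app q.1 q.2 :=
  (InvImage.equivalence _ (fun p : Σ j, F.obj j => s.ι.app p.1 p.2) eq_equivalence).eqvGen_iff.mp
    (h.mono fun _ _ ⟨f, hf⟩ => by simp only [InvImage, hf, s.w_apply])

variable {x : s.pt}

lemma ElementsOver.zigzag_of_eqvGen {p q : F.Elements}
    (h : Relation.EqvGen F.ColimitTypeRel p q) (hp : s.ι.app p.1 p.2 = x)
    (hq : s.ι.app q.1 q.2 = x) : Zigzag (⟨p, hp⟩ : ElementsOver s x) ⟨q, hq⟩ := by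
  induction h with
  | rel p q hpq =>
    obtain ⟨f, hf⟩ := hpq
    exact Zigzag.of_hom (ObjectProperty.homMk ⟨f, hf.symm⟩)
  | refl => rfl
  | symm p q _ ih => exact (ih hq hp).symm
  | trans p q r hpq _ ih₁ ih₂ =>
    have hq' : s.ι.app q.1 q.2 = x := (Cocone.ι_app_eq_of_eqvGen hpq).symm.trans hp
    exact (ih₁ hp hq').trans (ih₂ hq' hq)

variable [HasColimit F]

lemma ElementsOver.zigzag_iff (p q : ElementsOver s x) :
    Zigzag p q ↔ colimit.ι F p.obj.1 p.obj.2 = colimit.ι F q.obj.1 q.obj.2 := by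
  refine ⟨fun h => ?_, fun h => ?_⟩
  · induction h with
    | refl => rfl
    | tail _ hz ih =>
      rcases hz with ⟨⟨f⟩⟩ | ⟨⟨f⟩⟩
      · exact ih.trans (Types.colimit_sound f.hom.1 f.hom.2)
      · exact ih.trans (Types.colimit_sound f.hom.1 f.hom.2).symm
  · exact zigzag_of_eqvGen (Types.colimit_eq h) p.2 q.2

theorem injective_colimit_desc_iff :
    Function.Injective (colimit.desc F s) ↔ ∀ x, IsPreconnected (ElementsOver s x) := by
  refine ⟨fun hinj x => zigzag_isPreconnected fun p q => ?_, fun _ a b hab => ?_⟩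
  · refine (ElementsOver.zigzag_iff p q).2 (hinj ?_)
    rw [colimit.ι_desc_apply, colimit.ι_desc_apply, p.2, q.2]
  · obtain ⟨j, a, rfl⟩ := Types.jointly_surjective' a
    obtain ⟨k, b, rfl⟩ := Types.jointly_surjective' b
    let p : ElementsOver s (s.ι.app j a) := ⟨⟨j, a⟩, rfl⟩
    let q : ElementsOver s (s.ι.app j a) := ⟨⟨k, b⟩, by simpa using hab.symm⟩
    exact (ElementsOver.zigzag_iff p q).1 (isPreconnected_zigzag p q)

end ElementsOver

section

variable {E : Type} [SmallCategory E] {φ : Eᵒᵖ ⥤ Type} {I : Type} {e : I → E}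
  {x : ∀ i, φ.obj (op (e i))}

instance inst_s9 : (elProj φ).Faithful := by unfold elProj; infer_instance

def coconeToElementsOver : Cocone (Discrete.functor fun i => elObj φ (e i) (x i)) ⥤
    ElementsOver (canProdCocone φ e) x where
  obj c := ⟨⟨c.pt, fun i => (elProj φ).map (c.ι.app ⟨i⟩)⟩, funext fun i => (c.ι.app ⟨i⟩).unop.2⟩
  map m := ObjectProperty.homMk ⟨m.hom, funext fun i =>
    ((elProj φ).map_comp _ _).symm.trans (congrArg (elProj φ).map (m.w ⟨i⟩))⟩

def elementsOverToCocone : ElementsOver (canProdCocone φ e) x ⥤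
    Cocone (Discrete.functor fun i => elObj φ (e i) (x i)) where
  obj p :=
    { pt := p.obj.1
      ι := Discrete.natTrans fun i => Quiver.Hom.op ⟨(p.obj.2 i.as).op, congrFun p.2 i.as⟩ }
  map f :=
    { hom := f.hom.1
      w := fun i => (elProj φ).map_injective (((elProj φ).map_comp _ _).trans
        (congrFun f.hom.2 i.as)) }

def coconeEquivElementsOver : Cocone (Discrete.functor fun i => elObj φ (e i) (x i)) ≌
    ElementsOver (canProdCocone φ e) x :=
  .mk coconeToElementsOver elementsOverToCocone
    (NatIso.ofComponents (fun c => Cocone.ext (Iso.refl _) fun _ => Category.comp_id _)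
      fun _ => by ext; simp [coconeToElementsOver, elementsOverToCocone])
    (NatIso.ofComponents (fun p => Iso.refl _) fun _ => by
      ext; exact (Category.comp_id _).trans (Category.id_comp _).symm)

end

theorem canProd_injective_iff_general (E : Type) [SmallCategory E] (φ : Eᵒᵖ ⥤ Type)
    (I : Type) (e : I → E) :
    Function.Injective (canProd φ e) ↔
      ∀ x : ∀ i, φ.obj (op (e i)),
        ∀ c c' : Cocone (Discrete.functor (fun i => elObj φ (e i) (x i))),
          Zigzag c c' := by
  refine injective_colimit_desc_iff.trans (forall_congr' fun x => ?_)
  refine (isPreconnected_iff_of_equivalence coconeEquivElementsOver).symm.trans ?_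
  exact ⟨fun _ => isPreconnected_zigzag, zigzag_isPreconnected⟩

/-- The canonical map `can : Colim_φ(e ↦ ∏ᵢ E(eᵢ,e)) → ∏ᵢ φ(eᵢ)`
is injective iff for every tuple `(xᵢ)ᵢ`, any two cocones in `el(φ)` over the
discrete family `((eᵢ, xᵢ))ᵢ` are connected by a finite zig-zag of morphisms of
cocones. -/
theorem canProd_injective_iff (E : Type) [SmallCategory E] (φ : Eᵒᵖ ⥤ Type)
    (I : Type) [Fintype I] (e : I → E) :
    Function.Injective (canProd φ e) ↔
      ∀ x : ∀ i, φ.obj (op (e i)),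
        ∀ c c' : Cocone (Discrete.functor (fun i => elObj φ (e i) (x i))),
          Zigzag c c' :=
  canProd_injective_iff_general E φ I e

end Paper
end
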